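/- arXiv:1901.06872 — 2 statements merged into one kernel-verified Lean document; each statement's English description precedes it below -/
import Mathlib

section
/- Let m ≥ 2 be an integer and let α ≥ (2·m^{3/2} + 3m − 1)/(m−1)^2 be a real number. Then for every point (x,y) ∈ ℝ^m × ℝ with x ≠ 0 and y > 0, the vector field ξ(x,y) = −y^α·∇F_{m,α}(x,y)/|∇F_{m,α}(x,y)| satisfies F_{m,α}(x,y)·div ξ(x,y) ≤ 0, where div ξ is the sum of the m+1 partial derivatives of the components of ξ. -/
/-!
Write `ξ = φ • ∇F` with `φ = -y^α / |∇F|`. Then `div ξ = φ ΔF + ∇φ · ∇F`, and a direct computation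
gives, with `u = α|x|²` and `v = (m-1)y²`, `F = (u² - v²)/4` and
`|∇F|³ div ξ = -α(m-1) y^α (u - v) P(u, v)`, where `P(u, v) = αu³ - 3u²v - 3uv² + (m-1)v³`. Hence
`F · div ξ = -α(m-1) y^α (u - v)² (u + v) P(u, v) / (4|∇F|³)`, and the bound on `α` makes `P`
nonnegative on the closed positive quadrant: with `q = √m`,
`(m-1)² P = ((m-1)v - (q+1)u)² ((m-1)v + (2q-1)u) + ((m-1)²α - (2q³ + 3q² - 1)) u³`.
-/

/-- The function `F_{m,α}(x,y) = (1/4)(α²|x|⁴ − (m−1)² y⁴)`. -/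
noncomputable def Ffun (m : ℕ) (α : ℝ) (z : EuclideanSpace ℝ (Fin m) × ℝ) : ℝ :=
  (1 / 4) * (α ^ 2 * ‖z.1‖ ^ 4 - ((m : ℝ) - 1) ^ 2 * z.2 ^ 4)

/-- The gradient `∇F_{m,α}(x,y) = (α²|x|² x, −(m−1)² y³)`. -/
noncomputable def gradF (m : ℕ) (α : ℝ) (z : EuclideanSpace ℝ (Fin m) × ℝ) :
    EuclideanSpace ℝ (Fin m) × ℝ :=
  ((α ^ 2 * ‖z.1‖ ^ 2) • z.1, -((m : ℝ) - 1) ^ 2 * z.2 ^ 3)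

/-- The Euclidean length `|∇F_{m,α}(x,y)|` of the gradient. -/
noncomputable def normGradF (m : ℕ) (α : ℝ) (z : EuclideanSpace ℝ (Fin m) × ℝ) : ℝ :=
  Real.sqrt (‖(gradF m α z).1‖ ^ 2 + (gradF m α z).2 ^ 2)

/-- The vector field `ξ(x,y) = −y^α · ∇F_{m,α}(x,y)/|∇F_{m,α}(x,y)|`. -/
noncomputable def xiField (m : ℕ) (α : ℝ) (z : EuclideanSpace ℝ (Fin m) × ℝ) :
    EuclideanSpace ℝ (Fin m) × ℝ :=
  (-(z.2 ^ α) / normGradF m α z) • gradF m α z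

/-- The divergence of `ξ`, i.e. the sum of the `m+1` partial derivatives of its components. -/
noncomputable def divXi (m : ℕ) (α : ℝ) (z : EuclideanSpace ℝ (Fin m) × ℝ) : ℝ :=
  (∑ i : Fin m, (fderiv ℝ (xiField m α) z (EuclideanSpace.single i 1, 0)).1 i) +
    (fderiv ℝ (xiField m α) z (0, 1)).2

lemma cubic_form_nonneg {m α u v : ℝ} (hm : 1 < m)
    (hα : 2 * m ^ ((3 : ℝ) / 2) + 3 * m - 1 ≤ (m - 1) ^ 2 * α) (hu : 0 ≤ u) (hv : 0 ≤ v) :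
    0 ≤ α * u ^ 3 - 3 * u ^ 2 * v - 3 * u * v ^ 2 + (m - 1) * v ^ 3 := by
  obtain ⟨q, hq, rfl⟩ : ∃ q, 1 < q ∧ m = q ^ 2 :=
    ⟨√m, Real.lt_sqrt_of_sq_lt (by linarith), (Real.sq_sqrt (by linarith)).symm⟩
  have hq3 : (q ^ 2) ^ ((3 : ℝ) / 2) = q ^ 3 := by
    rw [← Real.rpow_natCast, ← Real.rpow_natCast, ← Real.rpow_mul (by positivity)]
    norm_num
  rw [hq3] at hα
  have hc : 0 < q ^ 2 - 1 := by nlinarith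
  have hsos : (q ^ 2 - 1) ^ 2 * (α * u ^ 3 - 3 * u ^ 2 * v - 3 * u * v ^ 2 + (q ^ 2 - 1) * v ^ 3)
      = ((q ^ 2 - 1) * v - (q + 1) * u) ^ 2 * ((q ^ 2 - 1) * v + (2 * q - 1) * u)
        + ((q ^ 2 - 1) ^ 2 * α - (2 * q ^ 3 + 3 * q ^ 2 - 1)) * u ^ 3 := by ring
  refine nonneg_of_mul_nonneg_right ?_ (pow_pos hc 2)
  rw [hsos]
  have : 0 ≤ (q ^ 2 - 1) * v + (2 * q - 1) * u := by nlinarith [mul_nonneg hc.le hv]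
  have : 0 ≤ (q ^ 2 - 1) ^ 2 * α - (2 * q ^ 3 + 3 * q ^ 2 - 1) := by linarith
  positivity

section CoordTrace

variable {ι : Type*} [Fintype ι] [DecidableEq ι]

noncomputable def coordTrace (L : (EuclideanSpace ℝ ι × ℝ) →L[ℝ] EuclideanSpace ℝ ι × ℝ) : ℝ :=
  ∑ i, (L (EuclideanSpace.single i 1, 0)).1 i + (L (0, 1)).2

lemma coordTrace_add (L M : (EuclideanSpace ℝ ι × ℝ) →L[ℝ] EuclideanSpace ℝ ι × ℝ) :
    coordTrace (L + M) = coordTrace L + coordTrace M := by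
  simp only [coordTrace, add_apply, Prod.fst_add, Prod.snd_add, PiLp.add_apply,
    Finset.sum_add_distrib]
  ring

lemma coordTrace_smul (c : ℝ) (L : (EuclideanSpace ℝ ι × ℝ) →L[ℝ] EuclideanSpace ℝ ι × ℝ) :
    coordTrace (c • L) = c * coordTrace L := by
  simp only [coordTrace, smul_apply, Prod.smul_fst, Prod.smul_snd, PiLp.smul_apply, smul_eq_mul,
    ← Finset.mul_sum]
  ring

lemma coordTrace_smulRight (ℓ : StrongDual ℝ (EuclideanSpace ℝ ι × ℝ))
    (w : EuclideanSpace ℝ ι × ℝ) : coordTrace (ℓ.smulRight w) = ℓ w := by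
  obtain ⟨w₁, w₂⟩ := w
  have hw : ((w₁, w₂) : EuclideanSpace ℝ ι × ℝ)
      = ∑ i, w₁ i • (EuclideanSpace.single i 1, 0) + w₂ • (0, 1) := by
    ext i
    · simp [Prod.fst_sum, Pi.single_apply]
    · simp [Prod.snd_sum]
  conv_rhs => rw [hw, map_add, map_sum]; simp only [map_smul, smul_eq_mul]
  simp [coordTrace, mul_comm]

lemma coordTrace_inl_comp_fst :
    coordTrace ((ContinuousLinearMap.inl ℝ (EuclideanSpace ℝ ι) ℝ).comp
      (ContinuousLinearMap.fst ℝ (EuclideanSpace ℝ ι) ℝ)) = Fintype.card ι := by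
  simp [coordTrace]

lemma coordTrace_fderiv_smul {φ : EuclideanSpace ℝ ι × ℝ → ℝ}
    {G : EuclideanSpace ℝ ι × ℝ → EuclideanSpace ℝ ι × ℝ} {z : EuclideanSpace ℝ ι × ℝ}
    (hφ : DifferentiableAt ℝ φ z) (hG : DifferentiableAt ℝ G z) :
    coordTrace (fderiv ℝ (fun z ↦ φ z • G z) z)
      = φ z * coordTrace (fderiv ℝ G z) + fderiv ℝ φ z (G z) := by
  rw [fderiv_fun_smul hφ hG, coordTrace_add, coordTrace_smul, coordTrace_smulRight]

end CoordTrace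

section Field

variable {m : ℕ} {α : ℝ}

lemma gradF_eq_add_smul :
    gradF m α = fun z ↦ (α ^ 2 * ‖z.1‖ ^ 2) • (z.1, (0 : ℝ))
      + (-((m : ℝ) - 1) ^ 2 * z.2 ^ 3) • ((0 : EuclideanSpace ℝ (Fin m)), (1 : ℝ)) := by
  ext z i <;> simp [gradF]

lemma hasFDerivAt_gradF (z : EuclideanSpace ℝ (Fin m) × ℝ) :
    HasFDerivAt (gradF m α)
      ((α ^ 2 * ‖z.1‖ ^ 2) • (ContinuousLinearMap.inl ℝ _ ℝ).comp (ContinuousLinearMap.fst ℝ _ ℝ)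
        + ((2 * α ^ 2) • (innerSL ℝ z.1).comp (ContinuousLinearMap.fst ℝ _ ℝ)).smulRight (z.1, 0)
        + ((-3 * ((m : ℝ) - 1) ^ 2 * z.2 ^ 2) • ContinuousLinearMap.snd ℝ _ ℝ).smulRight (0, 1))
      z := by
  have hnorm := (hasFDerivAt_fst (p := z)).norm_sq.const_mul (α ^ 2)
  have hinl : HasFDerivAt (fun z : EuclideanSpace ℝ (Fin m) × ℝ ↦ (z.1, (0 : ℝ)))
      ((ContinuousLinearMap.inl ℝ _ ℝ).comp (ContinuousLinearMap.fst ℝ _ ℝ)) z :=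
    ((ContinuousLinearMap.inl ℝ _ ℝ).comp (ContinuousLinearMap.fst ℝ _ ℝ)).hasFDerivAt (x := z)
  have hcube := ((hasFDerivAt_snd (𝕜 := ℝ) (p := z)).pow 3).const_mul (-((m : ℝ) - 1) ^ 2)
  rw [gradF_eq_add_smul]
  refine ((hnorm.fun_smul hinl).fun_add (hcube.smul_const _)).congr_fderiv ?_
  ext v <;> simp [mul_assoc, mul_left_comm]

lemma coordTrace_fderiv_gradF (z : EuclideanSpace ℝ (Fin m) × ℝ) :
    coordTrace (fderiv ℝ (gradF m α) z)
      = ((m : ℝ) + 2) * α ^ 2 * ‖z.1‖ ^ 2 - 3 * ((m : ℝ) - 1) ^ 2 * z.2 ^ 2 := by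
  rw [(hasFDerivAt_gradF z).fderiv, coordTrace_add, coordTrace_add, coordTrace_smul,
    coordTrace_smulRight, coordTrace_smulRight, coordTrace_inl_comp_fst]
  simp
  ring

lemma normGradF_eq_sqrt (z : EuclideanSpace ℝ (Fin m) × ℝ) :
    normGradF m α z = √(α ^ 4 * ‖z.1‖ ^ 6 + ((m : ℝ) - 1) ^ 4 * z.2 ^ 6) := by
  rw [normGradF, gradF, norm_smul, Real.norm_of_nonneg (by positivity)]
  ring_nf

lemma hasFDerivAt_normGradF {z : EuclideanSpace ℝ (Fin m) × ℝ} (hN : normGradF m α z ≠ 0) :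
    HasFDerivAt (normGradF m α)
      ((3 / normGradF m α z) •
        ((α ^ 4 * ‖z.1‖ ^ 4) • (innerSL ℝ z.1).comp (ContinuousLinearMap.fst ℝ _ ℝ)
          + (((m : ℝ) - 1) ^ 4 * z.2 ^ 5) • ContinuousLinearMap.snd ℝ _ ℝ)) z := by
  have hS := ((hasFDerivAt_fst (p := z)).norm_sq.pow 3).const_mul (α ^ 4) |>.fun_add
    (((hasFDerivAt_snd (𝕜 := ℝ) (p := z)).pow 6).const_mul (((m : ℝ) - 1) ^ 4))
  have hfun : normGradF m α
      = fun z ↦ √(α ^ 4 * (‖z.1‖ ^ 2) ^ 3 + ((m : ℝ) - 1) ^ 4 * z.2 ^ 6) := by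
    funext z
    rw [normGradF_eq_sqrt]
    ring_nf
  rw [hfun] at hN ⊢
  refine (hS.sqrt (Real.sqrt_ne_zero'.mp hN).ne').congr_fderiv ?_
  ext v <;> simp <;> ring

lemma divXi_eq {x : EuclideanSpace ℝ (Fin m)} {y : ℝ} (hy : 0 < y)
    (hN : normGradF m α (x, y) ≠ 0) :
    divXi m α (x, y) = y ^ α * (3 * (α ^ 6 * ‖x‖ ^ 8 - ((m : ℝ) - 1) ^ 6 * y ^ 8)
      + (α * ((m : ℝ) - 1) ^ 2 * y ^ 2
          - (((m : ℝ) + 2) * α ^ 2 * ‖x‖ ^ 2 - 3 * ((m : ℝ) - 1) ^ 2 * y ^ 2))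
        * (α ^ 4 * ‖x‖ ^ 6 + ((m : ℝ) - 1) ^ 4 * y ^ 6)) / normGradF m α (x, y) ^ 3 := by
  have hφ := ((hasFDerivAt_snd (𝕜 := ℝ) (p := (x, y))).rpow_const (p := α) (Or.inl hy.ne')).fun_neg
    |>.fun_mul ((hasDerivAt_inv hN).comp_hasFDerivAt _ (hasFDerivAt_normGradF hN))
  simp only [Function.comp_def, ← div_eq_mul_inv] at hφ
  show coordTrace (fderiv ℝ (fun z ↦ (-(z.2 ^ α) / normGradF m α z) • gradF m α z) (x, y)) = _
  rw [coordTrace_fderiv_smul hφ.differentiableAt (hasFDerivAt_gradF _).differentiableAt,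
    coordTrace_fderiv_gradF, hφ.fderiv]
  have hN2 : normGradF m α (x, y) ^ 2 = α ^ 4 * ‖x‖ ^ 6 + ((m : ℝ) - 1) ^ 4 * y ^ 6 := by
    rw [normGradF_eq_sqrt, Real.sq_sqrt (by positivity)]
  simp [gradF, Real.rpow_sub_one hy.ne']
  field_simp
  rw [hN2]
  ring

end Field

theorem F_mul_div_xi_nonpos_general (m : ℕ) (hm : 2 ≤ m) (α : ℝ)
    (hα : α ≥ (2 * (m : ℝ) ^ ((3 : ℝ) / 2) + 3 * (m : ℝ) - 1) / ((m : ℝ) - 1) ^ 2)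
    (x : EuclideanSpace ℝ (Fin m)) (y : ℝ) (hy : 0 < y) :
    Ffun m α (x, y) * divXi m α (x, y) ≤ 0 := by
  have hc : 0 < (m : ℝ) - 1 := by
    have : (2 : ℝ) ≤ m := by exact_mod_cast hm
    linarith
  have hα' : 2 * (m : ℝ) ^ ((3 : ℝ) / 2) + 3 * m - 1 ≤ ((m : ℝ) - 1) ^ 2 * α := by
    rw [ge_iff_le, div_le_iff₀ (by positivity)] at hα
    linarith
  have hα0 : 0 < α := by
    have : 0 ≤ (m : ℝ) ^ ((3 : ℝ) / 2) := by positivity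
    nlinarith
  have hN : 0 < normGradF m α (x, y) := by
    rw [normGradF_eq_sqrt]
    exact Real.sqrt_pos.mpr (by positivity)
  set u := α * ‖x‖ ^ 2 with hu
  set v := ((m : ℝ) - 1) * y ^ 2 with hv
  set P := α * u ^ 3 - 3 * u ^ 2 * v - 3 * u * v ^ 2 + ((m : ℝ) - 1) * v ^ 3 with hP_def
  have hP : 0 ≤ P := cubic_form_nonneg (by linarith) hα' (by positivity) (by positivity)
  have key : Ffun m α (x, y) * divXi m α (x, y)
      = -(α * ((m : ℝ) - 1) * y ^ α / (4 * normGradF m α (x, y) ^ 3))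
        * ((u - v) ^ 2 * (u + v) * P) := by
    rw [divXi_eq hy hN.ne', Ffun, hP_def, hu, hv]
    ring
  rw [key, neg_mul]
  exact neg_nonpos.mpr (mul_nonneg (by positivity) (mul_nonneg (by positivity) hP))

/-- For `m ≥ 2` and `α ≥ (2 m^{3/2} + 3m − 1)/(m−1)²`, the vector field
`ξ = −y^α ∇F_{m,α}/|∇F_{m,α}|` satisfies `F_{m,α} · div ξ ≤ 0` at every point with
`x ≠ 0` and `y > 0`. -/
theorem F_mul_div_xi_nonpos (m : ℕ) (hm : 2 ≤ m) (α : ℝ)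
    (hα : α ≥ (2 * (m : ℝ) ^ ((3 : ℝ) / 2) + 3 * (m : ℝ) - 1) / ((m : ℝ) - 1) ^ 2)
    (x : EuclideanSpace ℝ (Fin m)) (y : ℝ) (hx : x ≠ 0) (hy : 0 < y) :
    Ffun m α (x, y) * divXi m α (x, y) ≤ 0 :=
  F_mul_div_xi_nonpos_general m hm α hα x y hy
end

section
/- Let m ≥ 2 be an integer, α > 0 a real number, γ ∈ (0,1), and set t̂ = arctan(√(α/(m−1))). Then for every t ∈ (0, π/2) with t ≠ t̂, the inequality γ·g_{m,α}'(t) ≤ H_{m,α}(t, γ·g_{m,α}(t)) holds if and only if a·cos^2(2t) − 2b·cos(2t) + c ≥ 0, where a = (1−γ)·((m+α−1)^2 − γ^2·(m+α)^2), b = (m−α−1)·((m+α−1) − γ·(m+α)), and c = (1−γ)·γ^2·(m+α)^2 − 2γ·(m+α−1) + (1−γ)·(m−α−1)^2. -/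
/-!
Write `s = sin 2t`, `c = cos 2t` and `D = (m+α-1) c - (m-α-1)`, the denominator of `g = g_{m,α}`,
which vanishes on `(0, π/2)` only at `t̂` because `cos 2t̂ = (m-α-1)/(m+α-1)`. Since
`D + γ(m-α-1-(m+α-1)c) = (1-γ) D`, the right-hand side collapses to
`H(t, γg) = (m+α)(1-γ)(D² + γ²(m+α)² s²)/D²`, while `γ g' = 2γ(m+α)((m+α-1) - (m-α-1)c)/D²`.
After `s² = 1 - c²` the difference is `(m+α)/D²` times the quadratic `a c² - 2bc + c₀` of the
statement, and `(m+α)/D² > 0`.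
-/

/-- The right-hand side `H_{m,α}(t,w)` of the first-order ODE for `w = v̇`. -/
noncomputable def Hrhs (m : ℕ) (α : ℝ) (t w : ℝ) : ℝ :=
  (1 + w ^ 2) *
    ((m : ℝ) + α +
      (((m : ℝ) - α - 1 - ((m : ℝ) + α - 1) * Real.cos (2 * t)) / Real.sin (2 * t)) * w)

/-- The explicit upper solution `g_{m,α}(t)`. -/
noncomputable def gUpper (m : ℕ) (α : ℝ) (t : ℝ) : ℝ :=
  ((m : ℝ) + α) * Real.sin (2 * t) /
    (((m : ℝ) + α - 1) * Real.cos (2 * t) - ((m : ℝ) - α - 1))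

/-- The cone angle `t̂ = arctan √(α/(m−1))`. -/
noncomputable def tHat (m : ℕ) (α : ℝ) : ℝ :=
  Real.arctan (Real.sqrt (α / ((m : ℝ) - 1)))

open Real

theorem Real.cos_two_mul_arctan (x : ℝ) : cos (2 * arctan x) = (1 - x ^ 2) / (1 + x ^ 2) := by
  have : 1 + x ^ 2 ≠ 0 := by positivity
  rw [cos_two_mul, cos_sq_arctan]
  field_simp
  ring

theorem hasDerivAt_sin_two_mul_div_cos_two_mul_sub {A B E t : ℝ}
    (hD : B * cos (2 * t) - E ≠ 0) :
    HasDerivAt (fun x => A * sin (2 * x) / (B * cos (2 * x) - E))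
      (2 * A * (B - E * cos (2 * t)) / (B * cos (2 * t) - E) ^ 2) t := by
  have h2 : HasDerivAt (fun x : ℝ => 2 * x) 2 t := by
    simpa using (hasDerivAt_id t).const_mul 2
  have hnum := ((hasDerivAt_sin (2 * t)).comp t h2).const_mul A
  have hden := (((hasDerivAt_cos (2 * t)).comp t h2).const_mul B).sub_const E
  refine (hnum.div hden hD).congr_deriv ?_
  simp only [Function.comp_apply]
  congr 1
  linear_combination (2 * A * B) * sin_sq_add_cos_sq (2 * t)

section

variable {m : ℕ} {α : ℝ}

noncomputable def gDenom (m : ℕ) (α t : ℝ) : ℝ :=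
  ((m : ℝ) + α - 1) * cos (2 * t) - ((m : ℝ) - α - 1)

noncomputable def lowerSolutionQuadratic (m : ℕ) (α γ x : ℝ) : ℝ :=
  (1 - γ) * (((m : ℝ) + α - 1) ^ 2 - γ ^ 2 * ((m : ℝ) + α) ^ 2) * x ^ 2
    - 2 * (((m : ℝ) - α - 1) * (((m : ℝ) + α - 1) - γ * ((m : ℝ) + α))) * x
    + ((1 - γ) * γ ^ 2 * ((m : ℝ) + α) ^ 2 - 2 * γ * ((m : ℝ) + α - 1)
        + (1 - γ) * ((m : ℝ) - α - 1) ^ 2)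

theorem cos_two_mul_tHat (hm : 2 ≤ m) (hα : 0 ≤ α) :
    cos (2 * tHat m α) = ((m : ℝ) - α - 1) / ((m : ℝ) + α - 1) := by
  have hm1 : (0 : ℝ) < (m : ℝ) - 1 := by
    have : (2 : ℝ) ≤ m := by exact_mod_cast hm
    linarith
  have hB : (m : ℝ) + α - 1 ≠ 0 := by linarith
  rw [tHat, cos_two_mul_arctan, sq_sqrt (div_nonneg hα hm1.le)]
  field_simp
  ring

theorem tHat_mem_Ioo (hm : 2 ≤ m) (hα : 0 < α) : tHat m α ∈ Set.Ioo 0 (π / 2) := by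
  have hm1 : (0 : ℝ) < (m : ℝ) - 1 := by
    have : (2 : ℝ) ≤ m := by exact_mod_cast hm
    linarith
  exact ⟨arctan_pos.2 (sqrt_pos.2 (div_pos hα hm1)), arctan_lt_pi_div_two _⟩

theorem gDenom_ne_zero (hm : 2 ≤ m) (hα : 0 < α) {t : ℝ} (ht : t ∈ Set.Ioo 0 (π / 2))
    (ht' : t ≠ tHat m α) : gDenom m α t ≠ 0 := by
  intro hD
  have hB : (0 : ℝ) < (m : ℝ) + α - 1 := by
    have : (2 : ℝ) ≤ m := by exact_mod_cast hm
    linarith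
  have hcos : cos (2 * t) = cos (2 * tHat m α) := by
    rw [cos_two_mul_tHat hm hα.le, eq_div_iff hB.ne']
    unfold gDenom at hD
    linarith
  obtain ⟨ht0, htπ⟩ := ht
  obtain ⟨hτ0, hτπ⟩ := tHat_mem_Ioo hm hα
  have := injOn_cos ⟨by linarith, by linarith⟩ ⟨by linarith, by linarith⟩ hcos
  exact ht' (by linarith)

theorem hasDerivAt_gUpper {t : ℝ} (hD : gDenom m α t ≠ 0) :
    HasDerivAt (gUpper m α)
      (2 * ((m : ℝ) + α) * (((m : ℝ) + α - 1) - ((m : ℝ) - α - 1) * cos (2 * t))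
        / gDenom m α t ^ 2) t :=
  hasDerivAt_sin_two_mul_div_cos_two_mul_sub hD

theorem Hrhs_sub_deriv_gUpper (γ : ℝ) {t : ℝ} (hs : sin (2 * t) ≠ 0) (hD : gDenom m α t ≠ 0) :
    Hrhs m α t (γ * gUpper m α t) - γ * deriv (gUpper m α) t
      = ((m : ℝ) + α) * lowerSolutionQuadratic m α γ (cos (2 * t)) / gDenom m α t ^ 2 := by
  rw [(hasDerivAt_gUpper hD).deriv]
  have hg : gUpper m α t = ((m : ℝ) + α) * sin (2 * t) / gDenom m α t := rfl
  unfold gDenom at hD hg ⊢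
  rw [Hrhs, hg, lowerSolutionQuadratic]
  field_simp
  linear_combination (γ ^ 2 * ((m : ℝ) + α) ^ 3 * (1 - γ)
    * (((m : ℝ) + α - 1) * cos (2 * t) - ((m : ℝ) - α - 1))) * sin_sq_add_cos_sq (2 * t)

end

theorem lower_solution_iff_general (m : ℕ) (hm : 2 ≤ m) (α : ℝ) (hα : 0 < α)
    (γ : ℝ)
    (t : ℝ) (ht : t ∈ Set.Ioo 0 (Real.pi / 2)) (ht' : t ≠ tHat m α) :
    γ * deriv (gUpper m α) t ≤ Hrhs m α t (γ * gUpper m α t) ↔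
      (1 - γ) * (((m : ℝ) + α - 1) ^ 2 - γ ^ 2 * ((m : ℝ) + α) ^ 2) * Real.cos (2 * t) ^ 2
        - 2 * (((m : ℝ) - α - 1) * (((m : ℝ) + α - 1) - γ * ((m : ℝ) + α))) * Real.cos (2 * t)
        + ((1 - γ) * γ ^ 2 * ((m : ℝ) + α) ^ 2 - 2 * γ * ((m : ℝ) + α - 1)
            + (1 - γ) * ((m : ℝ) - α - 1) ^ 2) ≥ 0 := by
  have hs : sin (2 * t) ≠ 0 :=
    (sin_pos_of_pos_of_lt_pi (by linarith [ht.1]) (by linarith [ht.2])).ne'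
  have hD := gDenom_ne_zero hm hα ht ht'
  have hA : (0 : ℝ) < (m : ℝ) + α := by positivity
  rw [← sub_nonneg, Hrhs_sub_deriv_gUpper γ hs hD, le_div_iff₀ (by positivity), zero_mul,
    mul_nonneg_iff_of_pos_left hA]
  rfl

/-- For `γ ∈ (0,1)` and `t ∈ (0, π/2)`, `t ≠ t̂`, the lower-solution inequality
`γ g_{m,α}'(t) ≤ H_{m,α}(t, γ g_{m,α}(t))` holds if and only if
`a cos²(2t) − 2b cos(2t) + c ≥ 0` for the displayed coefficients `a`, `b`, `c`. -/
theorem lower_solution_iff (m : ℕ) (hm : 2 ≤ m) (α : ℝ) (hα : 0 < α)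
    (γ : ℝ) (hγ : γ ∈ Set.Ioo (0 : ℝ) 1)
    (t : ℝ) (ht : t ∈ Set.Ioo 0 (Real.pi / 2)) (ht' : t ≠ tHat m α) :
    γ * deriv (gUpper m α) t ≤ Hrhs m α t (γ * gUpper m α t) ↔
      (1 - γ) * (((m : ℝ) + α - 1) ^ 2 - γ ^ 2 * ((m : ℝ) + α) ^ 2) * Real.cos (2 * t) ^ 2
        - 2 * (((m : ℝ) - α - 1) * (((m : ℝ) + α - 1) - γ * ((m : ℝ) + α))) * Real.cos (2 * t)
        + ((1 - γ) * γ ^ 2 * ((m : ℝ) + α) ^ 2 - 2 * γ * ((m : ℝ) + α - 1)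
            + (1 - γ) * ((m : ℝ) - α - 1) ^ 2) ≥ 0 :=
  lower_solution_iff_general m hm α hα γ t ht ht'
end
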